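/- Let d, n ≥ 1 and τ, β, L > 0, and let f₁,…,fₙ : ℝ^d → ℝ be differentiable functions such that each fᵢ is L-Lipschitz on ℝ^d (equivalently ‖∇fᵢ(w)‖₂ ≤ L for all w) and each gradient ∇fᵢ is β-Lipschitz. Then the tilted loss F_τ(w) = (1/τ)·log((1/n)·Σᵢ₌₁ⁿ exp(τ·fᵢ(w))) is differentiable and its gradient ∇F_τ is (β + 2L²τ)-Lipschitz on ℝ^d; that is, F_τ is (β + 2L²τ)-smooth. -/

import Mathlib

open Real Finset InnerProductSpace

lemma softmax_l1 (n : ℕ) (hn : 0 < n) (b c : Fin n → ℝ) (ε : ℝ)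
    (h : ∀ i, |b i - c i| ≤ ε) :
    ∑ i, |exp (b i) / (∑ j, exp (b j)) - exp (c i) / (∑ j, exp (c j))| ≤ 2 * ε := by
  set u : Fin n → ℝ := fun i => b i - c i with hu
  set x : ℝ → Fin n → ℝ := fun t i => c i + t * u i with hx
  set S : ℝ → ℝ := fun t => ∑ j, exp (x t j) with hSdef
  have hS : ∀ t, 0 < S t := fun t =>
    Finset.sum_pos (fun j _ => exp_pos _) (by simpa using Finset.univ_nonempty_iff.2 ⟨⟨0, hn⟩⟩)
  set ψ : Fin n → ℝ → ℝ := fun i t => exp (x t i) / S t with hψ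
  set ψ' : Fin n → ℝ → ℝ := fun i t =>
    (u i * exp (x t i) * S t - exp (x t i) * ∑ j, u j * exp (x t j)) / (S t) ^ 2 with hψ'
  have hnum : ∀ i t, HasDerivAt (fun t => exp (x t i)) (u i * exp (x t i)) t := by
    intro i t
    have h1 : HasDerivAt (fun t : ℝ => c i + t * u i) (u i) t := by
      simpa using ((hasDerivAt_id t).mul_const (u i)).const_add (c i)
    simpa [mul_comm] using h1.exp
  have hSder : ∀ t, HasDerivAt S (∑ j, u j * exp (x t j)) t := by
    intro t
    exact HasDerivAt.fun_sum fun j _ => hnum j t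
  have hψder : ∀ i t, HasDerivAt (ψ i) (ψ' i t) t := by
    intro i t
    exact (hnum i t).div (hSder t) (hS t).ne'
  -- bound on derivative l1 norm
  have hbound : ∀ t, ∑ i, |ψ' i t| ≤ 2 * ε := by
    intro t
    set v : Fin n → ℝ := fun i => exp (x t i) / S t with hv
    have hSne := (hS t).ne'
    have hv0 : ∀ i, 0 ≤ v i := fun i => div_nonneg (exp_pos _).le (hS t).le
    have hv1 : ∑ i, v i = 1 := by
      rw [hv, ← Finset.sum_div, div_self hSne]
    have hue : ∀ i, |u i| ≤ ε := h
    have hvbar : ∑ j, v j * u j = (∑ j, u j * exp (x t j)) / S t := by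
      rw [eq_div_iff hSne, Finset.sum_mul]
      refine Finset.sum_congr rfl fun j _ => ?_
      rw [hv]; field_simp
    have hform : ∀ i, ψ' i t = v i * (u i - ∑ j, v j * u j) := by
      intro i
      rw [hψ', hvbar, hv]
      simp only
      field_simp
    have hvbar_le : |∑ j, v j * u j| ≤ ε := by
      calc |∑ j, v j * u j| ≤ ∑ j, |v j * u j| := Finset.abs_sum_le_sum_abs _ _
        _ ≤ ∑ j, v j * ε := by
            refine Finset.sum_le_sum fun j _ => ?_
            rw [abs_mul, abs_of_nonneg (hv0 j)]
            exact mul_le_mul_of_nonneg_left (hue j) (hv0 j)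
        _ = ε := by rw [← Finset.sum_mul, hv1, one_mul]
    calc ∑ i, |ψ' i t| ≤ ∑ i, v i * (2 * ε) := by
          refine Finset.sum_le_sum fun i _ => ?_
          rw [hform i, abs_mul, abs_of_nonneg (hv0 i)]
          refine mul_le_mul_of_nonneg_left ?_ (hv0 i)
          calc |u i - ∑ j, v j * u j| ≤ |u i| + |∑ j, v j * u j| := abs_sub _ _
            _ ≤ ε + ε := add_le_add (hue i) hvbar_le
            _ = 2 * ε := by ring
      _ = 2 * ε := by rw [← Finset.sum_mul, hv1, one_mul]
  -- signs and MVT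
  set s : Fin n → ℝ := fun i => if 0 ≤ ψ i 1 - ψ i 0 then (1 : ℝ) else -1 with hs
  have hsabs : ∀ i, s i * (ψ i 1 - ψ i 0) = |ψ i 1 - ψ i 0| := by
    intro i
    rw [hs]
    by_cases hi : 0 ≤ ψ i 1 - ψ i 0
    · simp [hi, abs_of_nonneg hi]
    · simp [hi, abs_of_neg (lt_of_not_ge hi)]
  set g : ℝ → ℝ := fun t => ∑ i, s i * ψ i t with hg
  have hgder : ∀ t, HasDerivAt g (∑ i, s i * ψ' i t) t := fun t =>
    HasDerivAt.fun_sum fun i _ => (hψder i t).const_mul (s i)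
  have hgbound : ∀ t, ‖∑ i, s i * ψ' i t‖ ≤ 2 * ε := by
    intro t
    rw [Real.norm_eq_abs]
    calc |∑ i, s i * ψ' i t| ≤ ∑ i, |s i * ψ' i t| := Finset.abs_sum_le_sum_abs _ _
      _ ≤ ∑ i, |ψ' i t| := by
          refine Finset.sum_le_sum fun i _ => ?_
          rw [abs_mul, hs]
          by_cases hi : 0 ≤ ψ i 1 - ψ i 0 <;> simp [hi]
      _ ≤ 2 * ε := hbound t
  have hMVT : ‖g 1 - g 0‖ ≤ 2 * ε * ‖(1 : ℝ) - 0‖ := by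
    refine Convex.norm_image_sub_le_of_norm_hasDerivWithin_le
      (fun t _ => (hgder t).hasDerivWithinAt) (fun t _ => hgbound t) convex_univ
      (Set.mem_univ _) (Set.mem_univ _)
  have hg10 : g 1 - g 0 = ∑ i, |ψ i 1 - ψ i 0| := by
    rw [hg]
    simp only
    rw [← Finset.sum_sub_distrib]
    refine Finset.sum_congr rfl fun i _ => ?_
    rw [← hsabs i]
    ring
  have hψ1 : ∀ i, ψ i 1 = exp (b i) / ∑ j, exp (b j) := by
    intro i
    have hx1 : ∀ j, x 1 j = b j := by intro j; rw [hx, hu]; simp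
    rw [hψ, hSdef]
    simp only [hx1]
  have hψ0 : ∀ i, ψ i 0 = exp (c i) / ∑ j, exp (c j) := by
    intro i
    have hx0 : ∀ j, x 0 j = c j := by intro j; rw [hx, hu]; simp
    rw [hψ, hSdef]
    simp only [hx0]
  calc ∑ i, |exp (b i) / (∑ j, exp (b j)) - exp (c i) / (∑ j, exp (c j))|
      = ∑ i, |ψ i 1 - ψ i 0| := by
        refine Finset.sum_congr rfl fun i _ => ?_
        rw [hψ1 i, hψ0 i]
    _ = g 1 - g 0 := hg10.symm
    _ ≤ ‖g 1 - g 0‖ := le_abs_self _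
    _ ≤ 2 * ε * ‖(1 : ℝ) - 0‖ := hMVT
    _ = 2 * ε := by simp

/-- If each `fᵢ` is differentiable with `‖∇fᵢ‖ ≤ L` and `β`-Lipschitz
gradient, then the tilted loss `F_τ(w) = (1/τ)·log((1/n)·Σᵢ exp(τ fᵢ(w)))` is differentiable
and its gradient is `(β + 2L²τ)`-Lipschitz, i.e. `F_τ` is `(β + 2L²τ)`-smooth. -/
theorem stmt_18 (d n : ℕ) (hd : 1 ≤ d) (hn : 1 ≤ n)
    (τ β L : ℝ) (hτ : 0 < τ) (hβ : 0 < β) (hL : 0 < L)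
    (f : Fin n → EuclideanSpace ℝ (Fin d) → ℝ)
    (hdiff : ∀ i, Differentiable ℝ (f i))
    (hgradbound : ∀ (i : Fin n) (w : EuclideanSpace ℝ (Fin d)), ‖gradient (f i) w‖ ≤ L)
    (hgradlip : ∀ (i : Fin n) (w w' : EuclideanSpace ℝ (Fin d)),
      ‖gradient (f i) w - gradient (f i) w'‖ ≤ β * ‖w - w'‖)
    (Fτ : EuclideanSpace ℝ (Fin d) → ℝ)
    (hFτ : ∀ w, Fτ w = (1 / τ) * Real.log ((1 / (n : ℝ)) * ∑ i, Real.exp (τ * f i w))) :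
    Differentiable ℝ Fτ ∧
    ∀ w w' : EuclideanSpace ℝ (Fin d),
      ‖gradient Fτ w - gradient Fτ w'‖ ≤ (β + 2 * L ^ 2 * τ) * ‖w - w'‖ := by
  have hn' : 0 < n := hn
  set D : Fin n → EuclideanSpace ℝ (Fin d) → (EuclideanSpace ℝ (Fin d) →L[ℝ] ℝ) := fun i w => fderiv ℝ (f i) w with hDdef
  have hgradD : ∀ i w, gradient (f i) w = (toDual ℝ (EuclideanSpace ℝ (Fin d))).symm (D i w) := fun i w => rfl
  have hDnorm : ∀ i w, ‖D i w‖ ≤ L := by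
    intro i w
    have := hgradbound i w
    rwa [hgradD, LinearIsometryEquiv.norm_map] at this
  have hDlip : ∀ i w w', ‖D i w - D i w'‖ ≤ β * ‖w - w'‖ := by
    intro i w w'
    have := hgradlip i w w'
    rwa [hgradD, hgradD, ← map_sub, LinearIsometryEquiv.norm_map] at this
  have hflip : ∀ i (w w' : EuclideanSpace ℝ (Fin d)), |f i w - f i w'| ≤ L * ‖w - w'‖ := by
    intro i w w'
    have := Convex.norm_image_sub_le_of_norm_hasFDerivWithin_le
      (f := f i) (f' := D i) (C := L)
      (fun x _ => ((hdiff i) x).hasFDerivAt.hasFDerivWithinAt)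
      (fun x _ => hDnorm i x) convex_univ (Set.mem_univ w') (Set.mem_univ w)
    simpa [Real.norm_eq_abs] using this
  set a : Fin n → EuclideanSpace ℝ (Fin d) → ℝ := fun i w => Real.exp (τ * f i w) with hadef
  set S : EuclideanSpace ℝ (Fin d) → ℝ := fun w => ∑ i, a i w with hSdef
  have hSpos : ∀ w, 0 < S w := fun w =>
    Finset.sum_pos (fun j _ => exp_pos _) (by simpa using Finset.univ_nonempty_iff.2 ⟨⟨0, hn'⟩⟩)
  set v : Fin n → EuclideanSpace ℝ (Fin d) → ℝ := fun i w => a i w / S w with hvdef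
  have hv0 : ∀ i w, 0 ≤ v i w := fun i w => div_nonneg (exp_pos _).le (hSpos w).le
  have hv1 : ∀ w, ∑ i, v i w = 1 := by
    intro w
    rw [hvdef]
    simp only
    rw [← Finset.sum_div, div_self (hSpos w).ne']
  -- rewrite Fτ
  have hFτ' : Fτ = fun w => (1 / τ) * (Real.log (S w) - Real.log n) := by
    funext w
    rw [hFτ w]
    congr 1
    have hnne : (1 / (n : ℝ)) ≠ 0 := by positivity
    rw [Real.log_mul hnne (hSpos w).ne', one_div, Real.log_inv]
    ring
  set S' : EuclideanSpace ℝ (Fin d) → (EuclideanSpace ℝ (Fin d) →L[ℝ] ℝ) := fun w => ∑ i, (τ * a i w) • D i w with hS'def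
  have hSder : ∀ w, HasFDerivAt S (S' w) w := by
    intro w
    refine HasFDerivAt.fun_sum fun i _ => ?_
    have h1 : HasFDerivAt (fun w => τ * f i w) (τ • D i w) w :=
      ((hdiff i) w).hasFDerivAt.const_mul τ
    have h2 := h1.exp
    rw [hadef]
    simp only
    convert h2 using 1
    · rfl
    · rfl
    rw [smul_smul]
    congr 1
    simp [hadef, mul_comm]
  set T : EuclideanSpace ℝ (Fin d) → (EuclideanSpace ℝ (Fin d) →L[ℝ] ℝ) := fun w => ∑ i, v i w • D i w with hTdef
  have hFder : ∀ w, HasFDerivAt Fτ (T w) w := by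
    intro w
    have h1 : HasFDerivAt (fun w => Real.log (S w)) ((S w)⁻¹ • S' w) w :=
      (hSder w).log (hSpos w).ne'
    have h2 : HasFDerivAt (fun w => (1 / τ) * (Real.log (S w) - Real.log n))
        ((1 / τ) • ((S w)⁻¹ • S' w)) w := (h1.sub_const _).const_mul _
    rw [hFτ']
    convert h2 using 1
    rw [hTdef, hS'def]
    simp only
    rw [Finset.smul_sum, Finset.smul_sum]
    refine Finset.sum_congr rfl fun i _ => ?_
    rw [smul_smul, smul_smul]
    congr 1
    rw [hvdef]
    simp only
    rw [div_eq_mul_inv, mul_comm (1 / τ), mul_assoc, one_div,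
      inv_mul_cancel_left₀ hτ.ne', mul_comm]
  constructor
  · exact fun w => (hFder w).differentiableAt
  intro w w'
  have hgradF : ∀ z, gradient Fτ z = (toDual ℝ (EuclideanSpace ℝ (Fin d))).symm (T z) := by
    intro z
    show (toDual ℝ (EuclideanSpace ℝ (Fin d))).symm (fderiv ℝ Fτ z) = _
    rw [(hFder z).fderiv]
  rw [hgradF, hgradF, ← map_sub, LinearIsometryEquiv.norm_map]
  -- split the difference
  have hsplit : T w - T w' = ∑ i, (v i w • (D i w - D i w') + (v i w - v i w') • D i w') := by
    rw [hTdef]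
    simp only
    rw [← Finset.sum_sub_distrib]
    refine Finset.sum_congr rfl fun i _ => ?_
    ext x
    simp
    ring
  have hL1 : ∑ i, |v i w - v i w'| ≤ 2 * (τ * (L * ‖w - w'‖)) := by
    have := softmax_l1 n hn' (fun i => τ * f i w) (fun i => τ * f i w')
      (τ * (L * ‖w - w'‖))
      (fun i => by
        rw [← mul_sub, abs_mul, abs_of_pos hτ]
        exact mul_le_mul_of_nonneg_left (hflip i w w') hτ.le)
    simpa [hvdef, hadef, hSdef] using this
  calc ‖T w - T w'‖
      ≤ ∑ i, ‖v i w • (D i w - D i w') + (v i w - v i w') • D i w'‖ := by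
        rw [hsplit]; exact norm_sum_le _ _
    _ ≤ ∑ i, (v i w * (β * ‖w - w'‖) + |v i w - v i w'| * L) := by
        refine Finset.sum_le_sum fun i _ => ?_
        refine (norm_add_le _ _).trans (add_le_add ?_ ?_)
        · refine (norm_smul_le (v i w) (D i w - D i w')).trans ?_
          rw [Real.norm_eq_abs, abs_of_nonneg (hv0 i w)]
          exact mul_le_mul_of_nonneg_left (hDlip i w w') (hv0 i w)
        · refine (norm_smul_le (v i w - v i w') (D i w')).trans ?_
          rw [Real.norm_eq_abs]
          exact mul_le_mul_of_nonneg_left (hDnorm i w') (abs_nonneg _)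
    _ = (∑ i, v i w) * (β * ‖w - w'‖) + (∑ i, |v i w - v i w'|) * L := by
        rw [Finset.sum_add_distrib, Finset.sum_mul, Finset.sum_mul]
    _ ≤ 1 * (β * ‖w - w'‖) + (2 * (τ * (L * ‖w - w'‖))) * L := by
        rw [hv1 w]
        exact add_le_add le_rfl (mul_le_mul_of_nonneg_right hL1 hL.le)
    _ = (β + 2 * L ^ 2 * τ) * ‖w - w'‖ := by ring
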